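/- Let G be a DAG with an ample framing F and no idle edges. Then every inner vertex v of G satisfies indeg(v) = 2 = outdeg(v), i.e., G is full. -/

import Mathlib

/-- A finite directed acyclic multigraph. -/
structure DAG where
  V : Type
  E : Type
  [fintypeV : Fintype V]
  [fintypeE : Fintype E]
  [decEqV : DecidableEq V]
  [decEqE : DecidableEq E]
  src : E → V
  tgt : E → V
  acyclic : ∀ v : V,
    ¬ Relation.TransGen (fun a b : V => ∃ e : E, src e = a ∧ tgt e = b) v v

attribute [instance] DAG.fintypeV DAG.fintypeE DAG.decEqV DAG.decEqE

namespace DAG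

variable (G : DAG)

/-- A vertex with no incoming edges. -/
def IsSource (v : G.V) : Prop := ∀ e : G.E, G.tgt e ≠ v

/-- A vertex with no outgoing edges. -/
def IsSink (v : G.V) : Prop := ∀ e : G.E, G.src e ≠ v

/-- An inner vertex is neither a source nor a sink. -/
def IsInner (v : G.V) : Prop := ¬ G.IsSource v ∧ ¬ G.IsSink v

instance : DecidablePred G.IsSource := fun v =>
  decidable_of_iff (∀ e : G.E, G.tgt e ≠ v) Iff.rfl

instance : DecidablePred G.IsSink := fun v =>
  decidable_of_iff (∀ e : G.E, G.src e ≠ v) Iff.rfl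

instance : DecidablePred G.IsInner := fun v =>
  decidable_of_iff (¬ G.IsSource v ∧ ¬ G.IsSink v) Iff.rfl

/-- In-degree: the number of edges with target `v`. -/
def indeg (v : G.V) : ℕ := Fintype.card {e : G.E // G.tgt e = v}

/-- Out-degree: the number of edges with source `v`. -/
def outdeg (v : G.V) : ℕ := Fintype.card {e : G.E // G.src e = v}

/-- A DAG is full if every inner vertex has in-degree 2 and out-degree 2. -/
def Full : Prop := ∀ v : G.V, G.IsInner v → G.indeg v = 2 ∧ G.outdeg v = 2

/-- A route: a maximal directed path, i.e. a nonempty list of consecutive edges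
starting at a source and ending at a sink. -/
structure Route where
  edges : List G.E
  ne : edges ≠ []
  chain : edges.Chain' (fun e f => G.tgt e = G.src f)
  source_start : G.IsSource (G.src (edges.head ne))
  sink_end : G.IsSink (G.tgt (edges.getLast ne))

/-- A route visits a vertex if the vertex is an endpoint of one of its edges. -/
def Route.visits (R : G.Route) (v : G.V) : Prop :=
  ∃ e ∈ R.edges, G.src e = v ∨ G.tgt e = v

/-- A framing: a linear order on the incoming edges and a linear order on the
outgoing edges of every inner vertex. -/
structure Framing where
  inlt : G.E → G.E → Prop
  outlt : G.E → G.E → Prop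
  inlt_tgt : ∀ {e f}, inlt e f → G.tgt e = G.tgt f
  inlt_inner : ∀ {e f}, inlt e f → G.IsInner (G.tgt e)
  inlt_irrefl : ∀ e, ¬ inlt e e
  inlt_trans : ∀ {e f g}, inlt e f → inlt f g → inlt e g
  inlt_total : ∀ e f, G.tgt e = G.tgt f → G.IsInner (G.tgt e) → e ≠ f →
    inlt e f ∨ inlt f e
  outlt_src : ∀ {e f}, outlt e f → G.src e = G.src f
  outlt_inner : ∀ {e f}, outlt e f → G.IsInner (G.src e)
  outlt_irrefl : ∀ e, ¬ outlt e e
  outlt_trans : ∀ {e f g}, outlt e f → outlt f g → outlt e g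
  outlt_total : ∀ e f, G.src e = G.src f → G.IsInner (G.src e) → e ≠ f →
    outlt e f ∨ outlt f e

/-- The induced order on paths ending at a common vertex: compare the two edges
just before the longest common suffix. -/
def inPathLt (F : G.Framing) (P Q : List G.E) : Prop :=
  ∃ (p q s : List G.E) (e f : G.E), e ≠ f ∧
    P = p ++ e :: s ∧ Q = q ++ f :: s ∧ F.inlt e f

/-- The induced order on paths starting at a common vertex: compare the two edges
just after the longest common prefix. -/
def outPathLt (F : G.Framing) (P Q : List G.E) : Prop :=
  ∃ (s p q : List G.E) (e f : G.E), e ≠ f ∧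
    P = s ++ e :: p ∧ Q = s ++ f :: q ∧ F.outlt e f

/-- Routes `P` and `Q` are in conflict (with `P` playing the first role) if they
pass through a common inner vertex `v` with `Pv ≺ Qv` in the in-order and
`vQ ≺ vP` in the out-order. -/
def Conflict (F : G.Framing) (P Q : G.Route) : Prop :=
  ∃ (v : G.V) (a b c d : List G.E) (ea ec : G.E),
    P.edges = a ++ [ea] ++ b ∧ Q.edges = c ++ [ec] ++ d ∧
    G.tgt ea = v ∧ G.tgt ec = v ∧ b ≠ [] ∧ d ≠ [] ∧
    G.inPathLt F (a ++ [ea]) (c ++ [ec]) ∧ G.outPathLt F d b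

/-- Two routes are coherent if they are not in conflict at any common inner
vertex (in either order). -/
def CoherentPair (F : G.Framing) (P Q : G.Route) : Prop :=
  ¬ G.Conflict F P Q ∧ ¬ G.Conflict F Q P

/-- A route is exceptional if it is coherent with every route. -/
def Exceptional (F : G.Framing) (R : G.Route) : Prop :=
  ∀ S : G.Route, G.CoherentPair F R S

/-- An edge is idle if it is the unique incoming or the unique outgoing edge of
an inner vertex. -/
def Idle (e : G.E) : Prop :=
  (G.IsInner (G.tgt e) ∧ ∀ f : G.E, G.tgt f = G.tgt e → f = e) ∨
  (G.IsInner (G.src e) ∧ ∀ f : G.E, G.src f = G.src e → f = e)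

/-- A framing is ample if every non-idle edge lies on an exceptional route. -/
def Ample (F : G.Framing) : Prop :=
  ∀ e : G.E, ¬ G.Idle e → ∃ R : G.Route, G.Exceptional F R ∧ e ∈ R.edges

/-- `e` is smallest among the edges entering its target. -/
def MinIn (F : G.Framing) (e : G.E) : Prop :=
  ∀ f : G.E, G.tgt f = G.tgt e → f ≠ e → F.inlt e f

/-- `e` is largest among the edges entering its target. -/
def MaxIn (F : G.Framing) (e : G.E) : Prop :=
  ∀ f : G.E, G.tgt f = G.tgt e → f ≠ e → F.inlt f e

/-- `e` is smallest among the edges leaving its source. -/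
def MinOut (F : G.Framing) (e : G.E) : Prop :=
  ∀ f : G.E, G.src f = G.src e → f ≠ e → F.outlt e f

/-- `e` is largest among the edges leaving its source. -/
def MaxOut (F : G.Framing) (e : G.E) : Prop :=
  ∀ f : G.E, G.src f = G.src e → f ≠ e → F.outlt f e

/-- The characteristic vector of a route. -/
noncomputable def charVec (R : G.Route) : G.E → ℝ :=
  fun e => if e ∈ R.edges then 1 else 0

end DAG

/-!
Take an inner vertex `v`. As no edge is idle, every edge at `v` has a sibling with the same
endpoint `v`, so both degrees are at least two. An edge `e` entering `v` lies on an exceptional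
route, which leaves `v` along some `f`. If an incoming edge lies below `e` and an outgoing one
above `f`, a route through these two conflicts with the exceptional route, and likewise with the
roles reversed; since `f` has a sibling, `e` must therefore be the least or the greatest edge
entering `v`. In a strict linear order where every element is least or greatest there are at
most two elements. Dually for outgoing edges.
-/

theorem Fintype.card_le_two_of_forall_least_or_greatest {α : Type*} [Fintype α]
    (r : α → α → Prop) (irrefl : ∀ a, ¬ r a a) (trans : ∀ {a b c}, r a b → r b c → r a c)
    (h : ∀ a, (∀ b, b ≠ a → r a b) ∨ (∀ b, b ≠ a → r b a)) : Fintype.card α ≤ 2 := by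
  classical
  have hleast : ∀ a b, (∀ c, c ≠ a → r a c) → (∀ c, c ≠ b → r b c) → a = b :=
    fun a b ha hb => by_contra fun hne => irrefl a (trans (ha b (Ne.symm hne)) (hb a hne))
  have hgreatest : ∀ a b, (∀ c, c ≠ a → r c a) → (∀ c, c ≠ b → r c b) → a = b :=
    fun a b ha hb => by_contra fun hne => irrefl a (trans (hb a hne) (ha b (Ne.symm hne)))
  have hinj : Function.Injective fun a => decide (∀ b, b ≠ a → r a b) := by
    intro a b hab
    have hab : (∀ c, c ≠ a → r a c) ↔ ∀ c, c ≠ b → r b c := decide_eq_decide.mp hab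
    by_cases ha : ∀ c, c ≠ a → r a c
    · exact hleast a b ha (hab.mp ha)
    · exact hgreatest a b ((h a).resolve_left ha) ((h b).resolve_left (hab.not.mp ha))
  simpa using Fintype.card_le_of_injective _ hinj

namespace DAG

variable {G : DAG}

def Adj (G : DAG) (a b : G.V) : Prop := ∃ e : G.E, G.src e = a ∧ G.tgt e = b

theorem wellFounded_transGen_adj : WellFounded (Relation.TransGen G.Adj) :=
  have : IsTrans G.V (Relation.TransGen G.Adj) := ⟨fun _ _ _ => .trans⟩
  have : Std.Irrefl (Relation.TransGen G.Adj) := ⟨G.acyclic⟩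
  Finite.wellFounded_of_trans_of_irrefl _

theorem wellFounded_flip_transGen_adj : WellFounded (flip (Relation.TransGen G.Adj)) :=
  have : IsTrans G.V (flip (Relation.TransGen G.Adj)) := ⟨fun _ _ _ h h' => h'.trans h⟩
  have : Std.Irrefl (flip (Relation.TransGen G.Adj)) := ⟨G.acyclic⟩
  Finite.wellFounded_of_trans_of_irrefl _

theorem exists_isChain_cons_isSink (e : G.E) :
    ∃ m : List G.E, (e :: m).IsChain (fun e f => G.tgt e = G.src f) ∧
      G.IsSink (G.tgt ((e :: m).getLast (List.cons_ne_nil e m))) := by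
  induction e using (wellFounded_flip_transGen_adj.onFun (f := G.tgt)).induction with
  | _ e ih =>
    by_cases hsink : G.IsSink (G.tgt e)
    · exact ⟨[], .singleton e, hsink⟩
    · obtain ⟨f, hf⟩ : ∃ f, G.src f = G.tgt e := by simpa [IsSink] using hsink
      obtain ⟨m, hm, hm_sink⟩ := ih f (.single ⟨f, hf, rfl⟩)
      exact ⟨f :: m, hm.cons_cons hf.symm, by simpa using hm_sink⟩

theorem exists_isChain_append_isSource (e : G.E) :
    ∃ m : List G.E, (m ++ [e]).IsChain (fun e f => G.tgt e = G.src f) ∧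
      G.IsSource (G.src ((m ++ [e]).head (by simp))) := by
  induction e using (wellFounded_transGen_adj.onFun (f := G.src)).induction with
  | _ e ih =>
    by_cases hsource : G.IsSource (G.src e)
    · exact ⟨[], .singleton e, hsource⟩
    · obtain ⟨d, hd⟩ : ∃ d, G.tgt d = G.src e := by simpa [IsSource] using hsource
      obtain ⟨m, hm, hm_source⟩ := ih d (.single ⟨d, rfl, hd⟩)
      refine ⟨m ++ [d], hm.append (.singleton e) (by simp [hd]), ?_⟩
      rwa [List.head_append_of_ne_nil (List.concat_ne_nil d m)]

theorem exists_route_through {e f : G.E} (hef : G.tgt e = G.src f) :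
    ∃ (S : G.Route) (c d : List G.E), S.edges = c ++ [e] ++ f :: d := by
  obtain ⟨c, hc, hc_source⟩ := exists_isChain_append_isSource e
  obtain ⟨d, hd, hd_sink⟩ := exists_isChain_cons_isSink f
  refine ⟨⟨c ++ [e] ++ f :: d, by simp, hc.append hd (by simp [hef]), ?_, ?_⟩, c, d, rfl⟩
  · rwa [List.head_append_of_ne_nil (List.concat_ne_nil e c)]
  · rwa [List.getLast_append_of_ne_nil _ (List.cons_ne_nil f d)]

theorem Route.tgt_eq_src {R : G.Route} {p q : List G.E} {e f : G.E}
    (hR : R.edges = p ++ [e] ++ f :: q) : G.tgt e = G.src f := by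
  have hchain := R.chain.infix (l₁ := [e, f]) ⟨p, q, by simp [hR]⟩
  simpa using hchain

theorem Route.exists_succ {R : G.Route} {e : G.E} (he : e ∈ R.edges)
    (hsink : ¬ G.IsSink (G.tgt e)) :
    ∃ (p q : List G.E) (f : G.E), R.edges = p ++ [e] ++ f :: q := by
  obtain ⟨p, t, hR⟩ := List.append_of_mem he
  cases t with
  | nil => exact absurd (by simpa [hR] using R.sink_end) hsink
  | cons f q => exact ⟨p, q, f, by simp [hR]⟩

theorem Route.exists_pred {R : G.Route} {f : G.E} (hf : f ∈ R.edges)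
    (hsource : ¬ G.IsSource (G.src f)) :
    ∃ (p q : List G.E) (e : G.E), R.edges = p ++ [e] ++ f :: q := by
  obtain ⟨t, q, hR⟩ := List.append_of_mem hf
  rcases t.eq_nil_or_concat with rfl | ⟨p, e, rfl⟩
  · exact absurd (by simpa [hR] using R.source_start) hsource
  · exact ⟨p, q, e, by simp [hR]⟩

theorem isInner_tgt_of_tgt_eq_src {e f : G.E} (hef : G.tgt e = G.src f) : G.IsInner (G.tgt e) :=
  ⟨fun h => h e rfl, fun h => h f hef.symm⟩

theorem exists_ne_tgt_eq_of_not_idle {e : G.E} (hv : G.IsInner (G.tgt e)) (he : ¬ G.Idle e) :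
    ∃ x, G.tgt x = G.tgt e ∧ x ≠ e := by
  by_contra! h
  exact he (.inl ⟨hv, h⟩)

theorem exists_ne_src_eq_of_not_idle {f : G.E} (hv : G.IsInner (G.src f)) (hf : ¬ G.Idle f) :
    ∃ y, G.src y = G.src f ∧ y ≠ f := by
  by_contra! h
  exact hf (.inr ⟨hv, h⟩)

theorem two_le_indeg_of_not_idle {e : G.E} (hv : G.IsInner (G.tgt e)) (he : ¬ G.Idle e) :
    2 ≤ G.indeg (G.tgt e) := by
  obtain ⟨x, hx, hxe⟩ := exists_ne_tgt_eq_of_not_idle hv he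
  exact Fintype.one_lt_card_iff.mpr ⟨⟨x, hx⟩, ⟨e, rfl⟩, by simpa using hxe⟩

theorem two_le_outdeg_of_not_idle {f : G.E} (hv : G.IsInner (G.src f)) (hf : ¬ G.Idle f) :
    2 ≤ G.outdeg (G.src f) := by
  obtain ⟨y, hy, hyf⟩ := exists_ne_src_eq_of_not_idle hv hf
  exact Fintype.one_lt_card_iff.mpr ⟨⟨y, hy⟩, ⟨f, rfl⟩, by simpa using hyf⟩

variable {F : G.Framing}

theorem indeg_le_two {v : G.V} (h : ∀ e, G.tgt e = v → G.MinIn F e ∨ G.MaxIn F e) :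
    G.indeg v ≤ 2 :=
  Fintype.card_le_two_of_forall_least_or_greatest (fun x y : {e // G.tgt e = v} => F.inlt x y)
    (fun x => F.inlt_irrefl x) F.inlt_trans fun ⟨e, he⟩ => (h e he).imp
      (fun hmin ⟨x, hx⟩ hne => hmin x (hx.trans he.symm) fun h => hne (Subtype.ext h))
      (fun hmax ⟨x, hx⟩ hne => hmax x (hx.trans he.symm) fun h => hne (Subtype.ext h))

theorem outdeg_le_two {v : G.V} (h : ∀ f, G.src f = v → G.MinOut F f ∨ G.MaxOut F f) :
    G.outdeg v ≤ 2 :=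
  Fintype.card_le_two_of_forall_least_or_greatest (fun x y : {f // G.src f = v} => F.outlt x y)
    (fun x => F.outlt_irrefl x) F.outlt_trans fun ⟨f, hf⟩ => (h f hf).imp
      (fun hmin ⟨x, hx⟩ hne => hmin x (hx.trans hf.symm) fun h => hne (Subtype.ext h))
      (fun hmax ⟨x, hx⟩ hne => hmax x (hx.trans hf.symm) fun h => hne (Subtype.ext h))

theorem conflict_of_turns {R S : G.Route} {p q c d : List G.E} {e f x y : G.E}
    (hR : R.edges = p ++ [e] ++ f :: q) (hS : S.edges = c ++ [x] ++ y :: d)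
    (hex : F.inlt e x) (hyf : F.outlt y f) : G.Conflict F R S := by
  refine ⟨G.tgt e, p, f :: q, c, y :: d, e, x, hR, hS, rfl, (F.inlt_tgt hex).symm,
    List.cons_ne_nil _ _, List.cons_ne_nil _ _, ?_, ?_⟩
  · exact ⟨p, c, [], e, x, fun h => F.inlt_irrefl e (h ▸ hex), by simp, by simp, hex⟩
  · exact ⟨[], d, q, y, f, fun h => F.outlt_irrefl f (h ▸ hyf), rfl, rfl, hyf⟩

theorem Exceptional.not_inlt_outlt {R : G.Route} (hR : G.Exceptional F R) {p q : List G.E}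
    {e f : G.E} (hRef : R.edges = p ++ [e] ++ f :: q) {x y : G.E} (hxy : G.tgt x = G.src y) :
    ¬ (F.inlt e x ∧ F.outlt y f) ∧ ¬ (F.inlt x e ∧ F.outlt f y) := by
  obtain ⟨S, c, d, hS⟩ := exists_route_through hxy
  exact ⟨fun ⟨hex, hyf⟩ => (hR S).1 (conflict_of_turns hRef hS hex hyf),
    fun ⟨hxe, hfy⟩ => (hR S).2 (conflict_of_turns hS hRef hxe hfy)⟩

theorem Exceptional.minIn_or_maxIn {R : G.Route} (hR : G.Exceptional F R) {p q : List G.E}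
    {e f : G.E} (hRef : R.edges = p ++ [e] ++ f :: q) (hf : ∃ y, G.src y = G.src f ∧ y ≠ f) :
    G.MinIn F e ∨ G.MaxIn F e := by
  have hef := Route.tgt_eq_src hRef
  have hv := isInner_tgt_of_tgt_eq_src hef
  by_contra! hcon
  simp only [MinIn, MaxIn, not_forall] at hcon
  obtain ⟨⟨x, hx, hxe, hex⟩, ⟨z, hz, hze, hze'⟩⟩ := hcon
  have hxe : F.inlt x e := (F.inlt_total e x hx.symm hv hxe.symm).resolve_left hex
  have hez : F.inlt e z := (F.inlt_total e z hz.symm hv hze.symm).resolve_right hze'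
  obtain ⟨y, hy, hyf⟩ := hf
  rcases F.outlt_total y f hy (hy ▸ hef ▸ hv) hyf with hyf | hfy
  · exact (hR.not_inlt_outlt hRef (hz.trans (hef.trans hy.symm))).1 ⟨hez, hyf⟩
  · exact (hR.not_inlt_outlt hRef (hx.trans (hef.trans hy.symm))).2 ⟨hxe, hfy⟩

theorem Exceptional.minOut_or_maxOut {R : G.Route} (hR : G.Exceptional F R) {p q : List G.E}
    {e f : G.E} (hRef : R.edges = p ++ [e] ++ f :: q) (he : ∃ x, G.tgt x = G.tgt e ∧ x ≠ e) :
    G.MinOut F f ∨ G.MaxOut F f := by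
  have hef := Route.tgt_eq_src hRef
  have hv : G.IsInner (G.src f) := hef ▸ isInner_tgt_of_tgt_eq_src hef
  by_contra! hcon
  simp only [MinOut, MaxOut, not_forall] at hcon
  obtain ⟨⟨y, hy, hyf, hfy⟩, ⟨z, hz, hzf, hzf'⟩⟩ := hcon
  have hyf : F.outlt y f := (F.outlt_total f y hy.symm hv hyf.symm).resolve_left hfy
  have hfz : F.outlt f z := (F.outlt_total f z hz.symm hv hzf.symm).resolve_right hzf'
  obtain ⟨x, hx, hxe⟩ := he
  rcases F.inlt_total x e hx (hx ▸ hef ▸ hv) hxe with hxe | hex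
  · exact (hR.not_inlt_outlt hRef (hx.trans (hef.trans hz.symm))).2 ⟨hxe, hfz⟩
  · exact (hR.not_inlt_outlt hRef (hx.trans (hef.trans hy.symm))).1 ⟨hex, hyf⟩

variable (F) in
theorem minIn_or_maxIn_of_ample (hample : G.Ample F) (hnoidle : ∀ e : G.E, ¬ G.Idle e)
    {e : G.E} (hsink : ¬ G.IsSink (G.tgt e)) : G.MinIn F e ∨ G.MaxIn F e := by
  obtain ⟨R, hR, heR⟩ := hample e (hnoidle e)
  obtain ⟨p, q, f, hRef⟩ := R.exists_succ heR hsink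
  have hef := Route.tgt_eq_src hRef
  exact hR.minIn_or_maxIn hRef
    (exists_ne_src_eq_of_not_idle (hef ▸ isInner_tgt_of_tgt_eq_src hef) (hnoidle f))

variable (F) in
theorem minOut_or_maxOut_of_ample (hample : G.Ample F) (hnoidle : ∀ e : G.E, ¬ G.Idle e)
    {f : G.E} (hsource : ¬ G.IsSource (G.src f)) : G.MinOut F f ∨ G.MaxOut F f := by
  obtain ⟨R, hR, hfR⟩ := hample f (hnoidle f)
  obtain ⟨p, q, e, hRef⟩ := R.exists_pred hfR hsource
  exact hR.minOut_or_maxOut hRef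
    (exists_ne_tgt_eq_of_not_idle (isInner_tgt_of_tgt_eq_src (Route.tgt_eq_src hRef)) (hnoidle e))

end DAG

/-- A DAG with an ample framing and no idle edges is full:
every inner vertex has in-degree 2 and out-degree 2. -/
theorem ample_no_idle_implies_full (G : DAG) (F : G.Framing)
    (hample : G.Ample F) (hnoidle : ∀ e : G.E, ¬ G.Idle e) :
    G.Full := by
  intro v hv
  obtain ⟨e₀, rfl⟩ : ∃ e, G.tgt e = v := by simpa [DAG.IsSource] using hv.1
  obtain ⟨f₀, hf₀⟩ : ∃ f, G.src f = G.tgt e₀ := by simpa [DAG.IsSink] using hv.2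
  refine ⟨le_antisymm ?_ ?_, le_antisymm ?_ ?_⟩
  · exact DAG.indeg_le_two fun e he => DAG.minIn_or_maxIn_of_ample F hample hnoidle (he ▸ hv.2)
  · exact DAG.two_le_indeg_of_not_idle hv (hnoidle e₀)
  · exact DAG.outdeg_le_two fun f hf =>
      DAG.minOut_or_maxOut_of_ample F hample hnoidle (hf ▸ hv.1)
  · rw [← hf₀]
    exact DAG.two_le_outdeg_of_not_idle (hf₀ ▸ hv) (hnoidle f₀)
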